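/- arXiv:1303.5561 — 3 statements merged into one kernel-verified Lean document; each statement's English description precedes it below -/
import Mathlib

section
/- Let (k_p) be a sequence of positive reals monotonically increasing to infinity. Then there exists a sequence (k'_p) of positive reals monotonically increasing to infinity such that k'_p ≤ k_p for all p, and ∏_{j=1}^{p+q} k'_j ≤ 2^(p+q) · (∏_{j=1}^{p} k'_j) · (∏_{j=1}^{q} k'_j) for all positive integers p, q. -/
/-!
Take `k' n = (n + 1) * min_{j ≤ n} k j / (j + 1)`, the largest sequence below `k` for which
`k' n / (n + 1)` is nonincreasing. Then `k' n / n` is nonincreasing for `n ≥ 1` as well, so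
`k' (p + j) ≤ (p + j) / j * k' j`, and multiplying over `j = 1, …, q` bounds the last `q`
factors of the product by `choose (p + q) q ≤ 2 ^ (p + q)` times `∏_{j ≤ q} k' j`. Since
`k' (n + 1) = min (k (n + 1)) ((n + 2) / (n + 1) * k' n)`, the sequence `k'` is monotone, and it
tends to infinity because `min ((n + 1) * (k' N / (N + 1))) (k N) ≤ k' n` for all `N` and `n`.
-/

open Finset Filter

theorem antitoneOn_div_of_antitone_div_add_one {f : ℕ → ℝ} (hf : ∀ n, 0 ≤ f n)
    (hanti : Antitone fun n : ℕ => f n / (n + 1)) :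
    AntitoneOn (fun n : ℕ => f n / n) (Set.Ici 1) := by
  intro j (hj : 1 ≤ j) m (hm : 1 ≤ m) hjm
  have hj' : (1 : ℝ) ≤ j := by exact_mod_cast hj
  have hm' : (1 : ℝ) ≤ m := by exact_mod_cast hm
  have hjm' : (j : ℝ) ≤ m := by exact_mod_cast hjm
  calc f m / m = f m / (m + 1) * (1 + 1 / m) := by field_simp
    _ ≤ f j / (j + 1) * (1 + 1 / j) := by
      apply mul_le_mul (hanti hjm) _ (by positivity) (div_nonneg (hf j) (by positivity))
      gcongr
    _ = f j / j := by field_simp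

theorem prod_Icc_add_le_choose_mul {f : ℕ → ℝ} (hf : ∀ n, 0 ≤ f n)
    (hanti : AntitoneOn (fun n : ℕ => f n / n) (Set.Ici 1)) (p q : ℕ) :
    ∏ j ∈ Icc 1 (p + q), f j ≤
      (p + q).choose q * (∏ j ∈ Icc 1 p, f j) * ∏ j ∈ Icc 1 q, f j := by
  induction q with
  | zero => simp
  | succ q ih =>
    have hstep : f (p + q + 1) ≤ (p + q + 1) / (q + 1) * f (q + 1) := by
      have hratio := hanti (a := q + 1) (b := p + q + 1) (by simp) (by simp) (by omega)
      push_cast at hratio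
      calc f (p + q + 1) = (p + q + 1) * (f (p + q + 1) / (p + q + 1)) := by field_simp
        _ ≤ (p + q + 1) * (f (q + 1) / (q + 1)) := by gcongr
        _ = (p + q + 1) / (q + 1) * f (q + 1) := by ring
    have hchoose :
        ((p + q).choose q : ℝ) * ((p + q + 1) / (q + 1)) = (p + q + 1).choose (q + 1) := by
      rw [mul_div_assoc', div_eq_iff (by positivity)]
      exact_mod_cast (mul_comm _ _).trans (Nat.add_one_mul_choose_eq (p + q) q)
    have hP := prod_nonneg fun j (_ : j ∈ Icc 1 p) => hf j
    have hQ := prod_nonneg fun j (_ : j ∈ Icc 1 q) => hf j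
    calc ∏ j ∈ Icc 1 (p + (q + 1)), f j = (∏ j ∈ Icc 1 (p + q), f j) * f (p + q + 1) :=
          prod_Icc_succ_top (by omega) f
      _ ≤ ((p + q).choose q * (∏ j ∈ Icc 1 p, f j) * ∏ j ∈ Icc 1 q, f j) *
            ((p + q + 1) / (q + 1) * f (q + 1)) :=
        mul_le_mul ih hstep (hf _) (by positivity)
      _ = (p + (q + 1)).choose (q + 1) * (∏ j ∈ Icc 1 p, f j) *
            ∏ j ∈ Icc 1 (q + 1), f j := by
        rw [prod_Icc_succ_top (by omega), ← add_assoc, ← hchoose]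
        ring

noncomputable def slopeMinorant (k : ℕ → ℝ) (n : ℕ) : ℝ :=
  (n + 1) * (range (n + 1)).inf' nonempty_range_add_one fun j => k j / (j + 1)

section slopeMinorant

variable {k : ℕ → ℝ}

theorem slopeMinorant_div_add_one (k : ℕ → ℝ) (n : ℕ) :
    slopeMinorant k n / (n + 1) =
      (range (n + 1)).inf' nonempty_range_add_one fun j => k j / (j + 1) :=
  mul_div_cancel_left₀ _ (by positivity)

theorem antitone_slopeMinorant_div (k : ℕ → ℝ) :
    Antitone fun n : ℕ => slopeMinorant k n / (n + 1) := by
  intro m n hmn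
  simp only [slopeMinorant_div_add_one]
  exact inf'_mono _ (range_subset_range.mpr (by omega)) _

theorem slopeMinorant_le (k : ℕ → ℝ) (n : ℕ) : slopeMinorant k n ≤ k n :=
  calc slopeMinorant k n ≤ (n + 1) * (k n / (n + 1)) :=
        mul_le_mul_of_nonneg_left (inf'_le _ (self_mem_range_succ n)) (by positivity)
    _ = k n := mul_div_cancel₀ _ (by positivity)

theorem slopeMinorant_pos (hpos : ∀ n, 0 < k n) (n : ℕ) : 0 < slopeMinorant k n :=
  mul_pos (by positivity) ((lt_inf'_iff _).mpr fun j _ => div_pos (hpos j) (by positivity))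

theorem slopeMinorant_succ (k : ℕ → ℝ) (n : ℕ) :
    slopeMinorant k (n + 1) = min (k (n + 1)) ((n + 2) * (slopeMinorant k n / (n + 1))) := by
  have hinsert : ((range (n + 2)).inf' nonempty_range_add_one fun j => k j / (j + 1)) =
      min (k (n + 1) / (n + 2))
        ((range (n + 1)).inf' nonempty_range_add_one fun j => k j / (j + 1)) := by
    convert inf'_insert nonempty_range_add_one (fun j : ℕ => k j / (j + 1)) (b := n + 1) using 2
    · exact range_add_one
    · rfl
    · push_cast; ring
  rw [slopeMinorant_div_add_one, slopeMinorant, hinsert, mul_min_of_nonneg _ _ (by positivity)]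
  push_cast
  rw [add_assoc, one_add_one_eq_two, mul_div_cancel₀ _ (by positivity)]

theorem monotone_slopeMinorant (hpos : ∀ n, 0 < k n) (hmono : Monotone k) :
    Monotone (slopeMinorant k) := by
  refine monotone_nat_of_le_succ fun n => ?_
  rw [slopeMinorant_succ]
  refine le_min ((slopeMinorant_le k n).trans (hmono n.le_succ)) ?_
  calc slopeMinorant k n = (n + 1) * (slopeMinorant k n / (n + 1)) := by field_simp
    _ ≤ (n + 2) * (slopeMinorant k n / (n + 1)) := by
      gcongr
      · exact (div_pos (slopeMinorant_pos hpos n) (by positivity)).le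
      · norm_num

theorem min_le_slopeMinorant (hnonneg : ∀ n, 0 ≤ k n) (hmono : Monotone k) (N n : ℕ) :
    min ((n + 1) * (slopeMinorant k N / (N + 1))) (k N) ≤ slopeMinorant k n := by
  obtain ⟨j, hj, hmin⟩ :=
    exists_mem_eq_inf' (nonempty_range_add_one (n := n)) fun j => k j / (j + 1)
  rw [slopeMinorant_div_add_one, slopeMinorant, hmin]
  rcases le_or_gt j N with hjN | hNj
  · refine min_le_of_left_le (mul_le_mul_of_nonneg_left ?_ (by positivity))
    exact inf'_le _ (mem_range_succ_iff.mpr hjN)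
  · have hjn : (j : ℝ) + 1 ≤ n + 1 := by
      gcongr
      exact_mod_cast mem_range_succ_iff.mp hj
    refine min_le_of_right_le ((hmono hNj.le).trans ?_)
    rw [mul_div_left_comm]
    exact le_mul_of_one_le_right (hnonneg j) ((one_le_div (by positivity)).mpr hjn)

theorem tendsto_slopeMinorant (hpos : ∀ n, 0 < k n) (hmono : Monotone k)
    (htend : Tendsto k atTop atTop) : Tendsto (slopeMinorant k) atTop atTop := by
  refine tendsto_atTop.mpr fun M => ?_
  obtain ⟨N, hN⟩ := (tendsto_atTop.mp htend M).exists
  have hslope : 0 < slopeMinorant k N / (N + 1) :=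
    div_pos (slopeMinorant_pos hpos N) (by positivity)
  have hlinear :
      Tendsto (fun n : ℕ => ((n : ℝ) + 1) * (slopeMinorant k N / (N + 1))) atTop atTop :=
    (tendsto_atTop_add_const_right _ 1 tendsto_natCast_atTop_atTop).atTop_mul_const hslope
  filter_upwards [tendsto_atTop.mp hlinear M] with n hn
  exact (le_min hn hN).trans (min_le_slopeMinorant (fun n => (hpos n).le) hmono N n)

end slopeMinorant

theorem exists_subordinate_sequence (k : ℕ → ℝ) (hpos : ∀ p, 0 < k p)
    (hmono : Monotone k) (htend : Filter.Tendsto k Filter.atTop Filter.atTop) :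
    ∃ k' : ℕ → ℝ, (∀ p, 0 < k' p) ∧ Monotone k' ∧
      Filter.Tendsto k' Filter.atTop Filter.atTop ∧ (∀ p, k' p ≤ k p) ∧
      ∀ p q : ℕ, 1 ≤ p → 1 ≤ q →
        (∏ j ∈ Finset.Icc 1 (p + q), k' j) ≤
          2 ^ (p + q) * (∏ j ∈ Finset.Icc 1 p, k' j) * ∏ j ∈ Finset.Icc 1 q, k' j := by
  have hnonneg n : 0 ≤ slopeMinorant k n := (slopeMinorant_pos hpos n).le
  refine ⟨slopeMinorant k, slopeMinorant_pos hpos, monotone_slopeMinorant hpos hmono,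
    tendsto_slopeMinorant hpos hmono htend, slopeMinorant_le k, fun p q _ _ => ?_⟩
  refine (prod_Icc_add_le_choose_mul hnonneg
    (antitoneOn_div_of_antitone_div_add_one hnonneg (antitone_slopeMinorant_div k)) p q).trans ?_
  have hchoose : ((p + q).choose q : ℝ) ≤ 2 ^ (p + q) := by
    exact_mod_cast Nat.choose_le_two_pow (p + q) q
  gcongr
  all_goals exact prod_nonneg fun j _ => hnonneg j
end

section
/- Let k > 0 and let z = x + iy ∈ ℂ^d with |x| > 2|y|, where √(z²) denotes the principal branch of the square root applied to z² = z₁²+···+z_d² (noting z² ∉ (-∞,0] under this hypothesis). Then |e^(k√(z²)) + e^(-k√(z²))| ≥ e^(c₁ k √(|x|²-|y|²)) - 1 > 0, where c₁ = √((3+√34)/(2√34)). -/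
/-!
Since `Re √S ≥ √(Re S)` for the principal root and `Re (z²) = |x|² - |y|²`, the real part `u`
of `k √(z²)` is at least `k √(|x|² - |y|²)`. The reverse triangle inequality gives
`|e^w + e^(-w)| ≥ e^u - e^(-u) ≥ e^u - 1`, and `c₁ ≤ 1` finishes the estimate.
-/

open Finset

lemma Complex.sqrt_re_le_re_cpow_half (S : ℂ) : Real.sqrt S.re ≤ (S ^ ((1 : ℂ) / 2)).re := by
  rw [one_div, Complex.cpow_inv_two_re]
  exact Real.sqrt_le_sqrt (by linarith [Complex.re_le_norm S])

lemma Complex.re_sum_sq {ι : Type*} (s : Finset ι) (z : ι → ℂ) :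
    (∑ j ∈ s, z j ^ 2).re = ∑ j ∈ s, (z j).re ^ 2 - ∑ j ∈ s, (z j).im ^ 2 := by
  simp only [Complex.re_sum, sq, Complex.mul_re, sum_sub_distrib]

lemma Complex.exp_re_sub_one_le_norm_exp_add_exp_neg {w : ℂ} (hw : 0 ≤ w.re) :
    Real.exp w.re - 1 ≤ ‖Complex.exp w + Complex.exp (-w)‖ := by
  have hrev := norm_sub_norm_le (Complex.exp w) (-Complex.exp (-w))
  rw [sub_neg_eq_add, norm_neg, Complex.norm_exp, Complex.norm_exp, Complex.neg_re] at hrev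
  linarith [Real.exp_le_one_iff.mpr (neg_nonpos.mpr hw)]

lemma sqrt_three_add_sqrt_34_div_le_one :
    Real.sqrt ((3 + Real.sqrt 34) / (2 * Real.sqrt 34)) ≤ 1 := by
  have h3 : (3 : ℝ) ≤ Real.sqrt 34 := (Real.le_sqrt (by norm_num) (by norm_num)).mpr (by norm_num)
  rw [Real.sqrt_le_one, div_le_one (by positivity)]
  linarith

theorem cosh_sqrt_lower_bound (d : ℕ) (k : ℝ) (hk : 0 < k) (z : Fin d → ℂ)
    (h : 2 * Real.sqrt (∑ j, (z j).im ^ 2) < Real.sqrt (∑ j, (z j).re ^ 2)) :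
    Real.exp (Real.sqrt ((3 + Real.sqrt 34) / (2 * Real.sqrt 34)) * k *
        Real.sqrt ((∑ j, (z j).re ^ 2) - ∑ j, (z j).im ^ 2)) - 1 ≤
      ‖Complex.exp (k * (∑ j, (z j) ^ 2) ^ ((1 : ℂ) / 2)) +
        Complex.exp (-(k * (∑ j, (z j) ^ 2) ^ ((1 : ℂ) / 2)))‖ ∧
    0 < Real.exp (Real.sqrt ((3 + Real.sqrt 34) / (2 * Real.sqrt 34)) * k *
        Real.sqrt ((∑ j, (z j).re ^ 2) - ∑ j, (z j).im ^ 2)) - 1 := by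
  set c₁ := Real.sqrt ((3 + Real.sqrt 34) / (2 * Real.sqrt 34))
  set w : ℂ := (∑ j, z j ^ 2) ^ ((1 : ℂ) / 2)
  have hYX : ∑ j, (z j).im ^ 2 < ∑ j, (z j).re ^ 2 := by
    rw [← Real.sqrt_lt_sqrt_iff (by positivity)]
    linarith [Real.sqrt_nonneg (∑ j, (z j).im ^ 2)]
  have hroot : Real.sqrt ((∑ j, (z j).re ^ 2) - ∑ j, (z j).im ^ 2) ≤ w.re := by
    rw [← Complex.re_sum_sq]
    exact Complex.sqrt_re_le_re_cpow_half _
  have hpos : 0 < c₁ * k * Real.sqrt ((∑ j, (z j).re ^ 2) - ∑ j, (z j).im ^ 2) := by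
    have : 0 < Real.sqrt ((∑ j, (z j).re ^ 2) - ∑ j, (z j).im ^ 2) :=
      Real.sqrt_pos.mpr (sub_pos.mpr hYX)
    positivity
  have hexponent : c₁ * k * Real.sqrt ((∑ j, (z j).re ^ 2) - ∑ j, (z j).im ^ 2) ≤
      ((k : ℂ) * w).re := by
    rw [Complex.re_ofReal_mul, mul_comm c₁ k, mul_assoc]
    exact mul_le_mul_of_nonneg_left
      (mul_le_of_le_one_left (Real.sqrt_nonneg _) sqrt_three_add_sqrt_34_div_le_one |>.trans hroot)
      hk.le
  refine ⟨?_, sub_pos.mpr (Real.one_lt_exp_iff.mpr hpos)⟩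
  refine le_trans ?_ (Complex.exp_re_sub_one_le_norm_exp_add_exp_neg (hpos.le.trans hexponent))
  gcongr
end

section
/- Let d ≥ 1, l > 0, and let w = ξ + iη ∈ ℂ^d with |η| < 1/(4ld²). Then |Σ_{j=1}^{d} cosh(2ld·w_j)| ≥ (√2/4) · Σ_{j=1}^{d} e^(2ld|ξ_j|); in particular this sum has no zeros in that strip. -/
/-!
Each summand has real part `cosh(2ld ξⱼ) cos(2ld ηⱼ)`. Since `|2ld ηⱼ| < 1/(2d) ≤ π/4`, the cosine
factor is at least `√2/2`, while `cosh x ≥ e^|x|/2`. Summing the real parts and bounding the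
real part of the sum by its modulus gives the claim.
-/

open Real

theorem Complex.cosh_re (z : ℂ) : (cosh z).re = Real.cosh z.re * Real.cos z.im := by
  conv_lhs => rw [← re_add_im z]
  rw [cosh_add, cosh_mul_I, sinh_mul_I, ← ofReal_cosh, ← ofReal_sinh, ← ofReal_cos, ← ofReal_sin]
  simp only [add_re, mul_re, ofReal_re, ofReal_im, I_re, I_im]
  ring

theorem Real.exp_abs_div_two_le_cosh (x : ℝ) : exp |x| / 2 ≤ cosh x := by
  rw [← cosh_abs, cosh_eq]
  linarith [exp_pos (-|x|)]

theorem Real.sqrt_two_div_two_le_cos {y : ℝ} (hy : |y| ≤ π / 4) : √2 / 2 ≤ cos y := by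
  rw [← cos_abs, ← cos_pi_div_four]
  exact cos_le_cos_of_nonneg_of_le_pi (abs_nonneg y) (by linarith [pi_pos]) hy

theorem Complex.sqrt_two_div_four_mul_exp_abs_re_le_cosh_re {z : ℂ} (hz : |z.im| ≤ π / 4) :
    √2 / 4 * Real.exp |z.re| ≤ (cosh z).re := by
  rw [cosh_re]
  calc √2 / 4 * Real.exp |z.re| = Real.exp |z.re| / 2 * (√2 / 2) := by ring
    _ ≤ Real.cosh z.re * Real.cos z.im :=
      mul_le_mul (exp_abs_div_two_le_cosh _) (sqrt_two_div_two_le_cos hz) (by positivity)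
        (cosh_pos _).le

theorem Real.abs_le_sqrt_sum_sq {ι : Type*} [Fintype ι] (f : ι → ℝ) (i : ι) :
    |f i| ≤ √(∑ j, f j ^ 2) :=
  abs_le_sqrt (Finset.single_le_sum (fun j _ => sq_nonneg (f j)) (Finset.mem_univ i))

theorem sum_cosh_complex_lower_bound_general (d : ℕ) (l : ℝ) (hl : 0 < l)
    (w : Fin d → ℂ) (h : Real.sqrt (∑ j, (w j).im ^ 2) < 1 / (4 * l * d ^ 2)) :
    Real.sqrt 2 / 4 * ∑ j, Real.exp (2 * l * d * |(w j).re|) ≤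
      ‖∑ j, Complex.cosh (2 * l * d * w j)‖ := by
  have hscale (z : ℂ) : (2 * l * d * z : ℂ) = ((2 * l * d : ℝ) : ℂ) * z := by push_cast; ring
  have hterm (j : Fin d) :
      √2 / 4 * exp (2 * l * d * |(w j).re|) ≤ (Complex.cosh (2 * l * d * w j)).re := by
    have hd : (1 : ℝ) ≤ d := Nat.one_le_cast.mpr j.pos
    have hη : 2 * l * d * |(w j).im| ≤ π / 4 := calc
      2 * l * d * |(w j).im| ≤ 2 * l * d * (1 / (4 * l * d ^ 2)) := by
        gcongr; exact ((abs_le_sqrt_sum_sq _ j).trans_lt h).le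
      _ = 1 / (2 * d) := by field_simp; ring
      _ ≤ 1 / 2 := by gcongr; linarith
      _ ≤ π / 4 := by linarith [two_le_pi]
    have hc : 0 < 2 * l * d := by positivity
    have key := Complex.sqrt_two_div_four_mul_exp_abs_re_le_cosh_re
      (z := ((2 * l * d : ℝ) : ℂ) * w j) (by rwa [Complex.im_ofReal_mul, abs_mul, abs_of_pos hc])
    rwa [Complex.re_ofReal_mul, abs_mul, abs_of_pos hc, ← hscale] at key
  calc √2 / 4 * ∑ j, exp (2 * l * d * |(w j).re|)
      = ∑ j, √2 / 4 * exp (2 * l * d * |(w j).re|) := Finset.mul_sum _ _ _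
    _ ≤ ∑ j, (Complex.cosh (2 * l * d * w j)).re := Finset.sum_le_sum fun j _ => hterm j
    _ = (∑ j, Complex.cosh (2 * l * d * w j)).re := (Complex.re_sum _ _).symm
    _ ≤ ‖∑ j, Complex.cosh (2 * l * d * w j)‖ := Complex.re_le_norm _

theorem sum_cosh_complex_lower_bound (d : ℕ) (hd : 1 ≤ d) (l : ℝ) (hl : 0 < l)
    (w : Fin d → ℂ) (h : Real.sqrt (∑ j, (w j).im ^ 2) < 1 / (4 * l * d ^ 2)) :
    Real.sqrt 2 / 4 * ∑ j, Real.exp (2 * l * d * |(w j).re|) ≤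
      ‖∑ j, Complex.cosh (2 * l * d * w j)‖ :=
  sum_cosh_complex_lower_bound_general d l hl w h
end
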